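/- arXiv:1308.5420 — 2 statements merged into one kernel-verified Lean document; each statement's English description precedes it below -/
import Mathlib

section
/- For every even integer n ≥ 2, the least possible order of a dissection of the n×n square into integer-sided squares all strictly smaller than n×n is 4; for every odd integer n ≥ 3, every dissection of the n×n square into integer-sided squares all strictly smaller than n×n has order at least 6. -/
/-- The closed square with lower-left corner `(q.1, q.2.1)` and side `q.2.2`,
as a subset of the plane. -/
def closedSq (q : ℕ × ℕ × ℕ) : Set (ℝ × ℝ) :=
  Set.Icc (q.1 : ℝ) (q.1 + q.2.2) ×ˢ Set.Icc (q.2.1 : ℝ) (q.2.1 + q.2.2)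

/-- The interior (open square) of the placed square `q`. -/
def openSq (q : ℕ × ℕ × ℕ) : Set (ℝ × ℝ) :=
  Set.Ioo (q.1 : ℝ) (q.1 + q.2.2) ×ˢ Set.Ioo (q.2.1 : ℝ) (q.2.1 + q.2.2)

/-- `D` is a dissection of the `n × n` square: a finite family of axis-aligned
squares with positive integer side lengths and integer lower-left corners, whose
interiors are pairwise disjoint and whose union is `[0,n] × [0,n]`.  Its order is
`D.card`. -/
def IsDissection (n : ℕ) (D : Finset (ℕ × ℕ × ℕ)) : Prop :=
  (∀ q ∈ D, 0 < q.2.2) ∧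
  (⋃ q ∈ D, closedSq q) = Set.Icc (0 : ℝ) (n : ℝ) ×ˢ Set.Icc (0 : ℝ) (n : ℝ) ∧
  (∀ q ∈ D, ∀ q' ∈ D, q ≠ q' → openSq q ∩ openSq q' = ∅)

/-- A dissection is prime if the gcd of the side lengths of its squares is 1. -/
def IsPrimeDissection (n : ℕ) (D : Finset (ℕ × ℕ × ℕ)) : Prop :=
  IsDissection n D ∧ D.gcd (fun q => q.2.2) = 1

lemma mem_closedSq {x y s : ℕ} {u v : ℝ} :
    (u, v) ∈ closedSq (x, y, s) ↔ ((x:ℝ) ≤ u ∧ u ≤ x + s) ∧ ((y:ℝ) ≤ v ∧ v ≤ y + s) := by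
  simp only [closedSq, Set.mem_prod, Set.mem_Icc]

lemma mem_openSq {x y s : ℕ} {u v : ℝ} :
    (u, v) ∈ openSq (x, y, s) ↔ ((x:ℝ) < u ∧ u < x + s) ∧ ((y:ℝ) < v ∧ v < y + s) := by
  simp only [openSq, Set.mem_prod, Set.mem_Ioo]

lemma diss_subset {n : ℕ} {D : Finset (ℕ × ℕ × ℕ)} (hD : IsDissection n D)
    {q : ℕ × ℕ × ℕ} (hq : q ∈ D) :
    closedSq q ⊆ Set.Icc (0 : ℝ) (n : ℝ) ×ˢ Set.Icc (0 : ℝ) (n : ℝ) := by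
  rw [← hD.2.1]
  exact Set.subset_biUnion_of_mem hq

lemma diss_bound {n : ℕ} {D : Finset (ℕ × ℕ × ℕ)} (hD : IsDissection n D)
    {x y s : ℕ} (hq : (x, y, s) ∈ D) : x + s ≤ n ∧ y + s ≤ n := by
  have hm : (((x:ℝ) + s), ((y:ℝ) + s)) ∈ closedSq (x, y, s) := by
    rw [mem_closedSq]
    have hs : (0:ℝ) ≤ s := Nat.cast_nonneg s
    constructor <;> constructor <;> linarith
  have h2 := diss_subset hD hq hm
  simp only [Set.mem_prod, Set.mem_Icc] at h2
  exact ⟨by exact_mod_cast h2.1.2, by exact_mod_cast h2.2.2⟩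

lemma diss_cover {n : ℕ} {D : Finset (ℕ × ℕ × ℕ)} (hD : IsDissection n D)
    {p : ℝ × ℝ} (hp : p ∈ Set.Icc (0 : ℝ) (n : ℝ) ×ˢ Set.Icc (0 : ℝ) (n : ℝ)) :
    ∃ q ∈ D, p ∈ closedSq q := by
  rw [← hD.2.1] at hp
  simpa using hp

lemma diss_disj {n : ℕ} {D : Finset (ℕ × ℕ × ℕ)} (hD : IsDissection n D)
    {x y s x' y' s' : ℕ} (hq : (x, y, s) ∈ D) (hq' : (x', y', s') ∈ D)
    (hne : (x, y, s) ≠ (x', y', s')) :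
    x' + s' ≤ x ∨ x + s ≤ x' ∨ y' + s' ≤ y ∨ y + s ≤ y' := by
  have hs : 0 < s := hD.1 _ hq
  have hs' : 0 < s' := hD.1 _ hq'
  by_contra h
  push_neg at h
  obtain ⟨h1, h2, h3, h4⟩ := h
  have hempty := hD.2.2 _ hq _ hq' hne
  have c1 : (x:ℝ) ≤ ((max x x' : ℕ):ℝ) := by exact_mod_cast le_max_left x x'
  have c2 : (x':ℝ) ≤ ((max x x' : ℕ):ℝ) := by exact_mod_cast le_max_right x x'
  have c3 : ((max x x' : ℕ):ℝ) + 1 ≤ (x:ℝ) + s := by exact_mod_cast (by omega : max x x' + 1 ≤ x + s)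
  have c4 : ((max x x' : ℕ):ℝ) + 1 ≤ (x':ℝ) + s' := by exact_mod_cast (by omega : max x x' + 1 ≤ x' + s')
  have d1 : (y:ℝ) ≤ ((max y y' : ℕ):ℝ) := by exact_mod_cast le_max_left y y'
  have d2 : (y':ℝ) ≤ ((max y y' : ℕ):ℝ) := by exact_mod_cast le_max_right y y'
  have d3 : ((max y y' : ℕ):ℝ) + 1 ≤ (y:ℝ) + s := by exact_mod_cast (by omega : max y y' + 1 ≤ y + s)
  have d4 : ((max y y' : ℕ):ℝ) + 1 ≤ (y':ℝ) + s' := by exact_mod_cast (by omega : max y y' + 1 ≤ y' + s')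
  have hmem : (((max x x' : ℕ):ℝ) + 1/2, ((max y y' : ℕ):ℝ) + 1/2)
      ∈ openSq (x, y, s) ∩ openSq (x', y', s') := by
    constructor <;> rw [mem_openSq] <;> exact ⟨⟨by linarith, by linarith⟩, by linarith, by linarith⟩
  rw [hempty] at hmem
  exact hmem

section Corners
variable {n : ℕ} {D : Finset (ℕ × ℕ × ℕ)}

lemma corner_BL (hD : IsDissection n D) (hn : 0 < n) :
    ∃ a, 0 < a ∧ (0, 0, a) ∈ D := by
  have hp : ((0:ℝ), (0:ℝ)) ∈ Set.Icc (0:ℝ) (n:ℝ) ×ˢ Set.Icc (0:ℝ) (n:ℝ) := by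
    constructor <;> simp
  obtain ⟨⟨x, y, s⟩, hq, hm⟩ := diss_cover hD hp
  rw [mem_closedSq] at hm
  have hx : x = 0 := by
    have := hm.1.1
    have : (x:ℝ) = 0 := le_antisymm this (Nat.cast_nonneg x)
    exact_mod_cast this
  have hy : y = 0 := by
    have := hm.2.1
    have : (y:ℝ) = 0 := le_antisymm this (Nat.cast_nonneg y)
    exact_mod_cast this
  exact ⟨s, hD.1 _ hq, by rwa [hx, hy] at hq⟩

lemma corner_BR (hD : IsDissection n D) (hn : 0 < n) :
    ∃ xb b, 0 < b ∧ xb + b = n ∧ (xb, 0, b) ∈ D := by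
  have hp : ((n:ℝ), (0:ℝ)) ∈ Set.Icc (0:ℝ) (n:ℝ) ×ˢ Set.Icc (0:ℝ) (n:ℝ) := by
    constructor <;> simp
  obtain ⟨⟨x, y, s⟩, hq, hm⟩ := diss_cover hD hp
  rw [mem_closedSq] at hm
  have hy : y = 0 := by
    have := hm.2.1
    have : (y:ℝ) = 0 := le_antisymm this (Nat.cast_nonneg y)
    exact_mod_cast this
  have hxs : n ≤ x + s := by exact_mod_cast hm.1.2
  have hxs' : x + s ≤ n := (diss_bound hD hq).1
  exact ⟨x, s, hD.1 _ hq, by omega, by rwa [hy] at hq⟩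

lemma corner_TL (hD : IsDissection n D) (hn : 0 < n) :
    ∃ yc c, 0 < c ∧ yc + c = n ∧ (0, yc, c) ∈ D := by
  have hp : ((0:ℝ), (n:ℝ)) ∈ Set.Icc (0:ℝ) (n:ℝ) ×ˢ Set.Icc (0:ℝ) (n:ℝ) := by
    constructor <;> simp
  obtain ⟨⟨x, y, s⟩, hq, hm⟩ := diss_cover hD hp
  rw [mem_closedSq] at hm
  have hx : x = 0 := by
    have := hm.1.1
    have : (x:ℝ) = 0 := le_antisymm this (Nat.cast_nonneg x)
    exact_mod_cast this
  have hys : n ≤ y + s := by exact_mod_cast hm.2.2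
  have hys' : y + s ≤ n := (diss_bound hD hq).2
  exact ⟨y, s, hD.1 _ hq, by omega, by rwa [hx] at hq⟩

lemma corner_TR (hD : IsDissection n D) (hn : 0 < n) :
    ∃ xd yd d, 0 < d ∧ xd + d = n ∧ yd + d = n ∧ (xd, yd, d) ∈ D := by
  have hp : ((n:ℝ), (n:ℝ)) ∈ Set.Icc (0:ℝ) (n:ℝ) ×ˢ Set.Icc (0:ℝ) (n:ℝ) := by
    constructor <;> simp
  obtain ⟨⟨x, y, s⟩, hq, hm⟩ := diss_cover hD hp
  rw [mem_closedSq] at hm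
  have hxs : n ≤ x + s := by exact_mod_cast hm.1.2
  have hys : n ≤ y + s := by exact_mod_cast hm.2.2
  obtain ⟨h1, h2⟩ := diss_bound hD hq
  exact ⟨x, y, s, hD.1 _ hq, by omega, by omega, hq⟩

end Corners

section Fillers
variable {n a b c d xb yc xd yd : ℕ} {D : Finset (ℕ × ℕ × ℕ)}

lemma filler_bottom (hD : IsDissection n D)
    (hBL : (0, 0, a) ∈ D) (ha : 0 < a) (hb : 0 < b) (hxb : xb + b = n)
    (hdef : a + b < n) :
    ∃ s, 0 < s ∧ (a, 0, s) ∈ D := by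
  have han : a + 1 ≤ n := by omega
  have hp : (((a:ℝ) + 1/2), (0:ℝ)) ∈ Set.Icc (0:ℝ) (n:ℝ) ×ˢ Set.Icc (0:ℝ) (n:ℝ) := by
    have h1 : (0:ℝ) ≤ a := Nat.cast_nonneg a
    have h2 : ((a:ℝ)) + 1 ≤ n := by exact_mod_cast (by exact_mod_cast han : ((a+1:ℕ):ℝ) ≤ ((n:ℕ):ℝ))
    refine ⟨Set.mem_Icc.mpr ⟨by linarith, by linarith⟩, Set.mem_Icc.mpr ⟨le_refl _, by positivity⟩⟩
  obtain ⟨⟨x, y, s⟩, hq, hm⟩ := diss_cover hD hp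
  rw [mem_closedSq] at hm
  have hy : y = 0 := by
    have h := hm.2.1
    have : (y:ℝ) = 0 := le_antisymm h (Nat.cast_nonneg y)
    exact_mod_cast this
  subst hy
  have hxa : x ≤ a := by
    have : (x:ℝ) < ((a + 1:ℕ):ℝ) := by push_cast; linarith [hm.1.1]
    have := Nat.cast_lt.mp this
    omega
  have hxs : a + 1 ≤ x + s := by
    have : ((a:ℕ):ℝ) < ((x + s:ℕ):ℝ) := by push_cast; linarith [hm.1.2]
    have := Nat.cast_lt.mp this
    omega
  have hs : 0 < s := hD.1 _ hq
  have hne : (x, 0, s) ≠ (0, 0, a) := by intro hEq; rw [Prod.mk.injEq, Prod.mk.injEq] at hEq; omega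
  have hdisj := diss_disj hD hq hBL hne
  have hxeq : x = a := by omega
  subst hxeq
  exact ⟨s, hs, hq⟩

lemma filler_left (hD : IsDissection n D)
    (hBL : (0, 0, a) ∈ D) (ha : 0 < a) (hc : 0 < c) (hyc : yc + c = n)
    (hdef : a + c < n) :
    ∃ s, 0 < s ∧ (0, a, s) ∈ D := by
  have han : a + 1 ≤ n := by omega
  have hp : ((0:ℝ), ((a:ℝ) + 1/2)) ∈ Set.Icc (0:ℝ) (n:ℝ) ×ˢ Set.Icc (0:ℝ) (n:ℝ) := by
    have h1 : (0:ℝ) ≤ a := Nat.cast_nonneg a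
    have h2 : ((a:ℝ)) + 1 ≤ n := by exact_mod_cast (by exact_mod_cast han : ((a+1:ℕ):ℝ) ≤ ((n:ℕ):ℝ))
    refine ⟨Set.mem_Icc.mpr ⟨le_refl _, by positivity⟩, Set.mem_Icc.mpr ⟨by linarith, by linarith⟩⟩
  obtain ⟨⟨x, y, s⟩, hq, hm⟩ := diss_cover hD hp
  rw [mem_closedSq] at hm
  have hx : x = 0 := by
    have h := hm.1.1
    have : (x:ℝ) = 0 := le_antisymm h (Nat.cast_nonneg x)
    exact_mod_cast this
  subst hx
  have hya : y ≤ a := by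
    have : (y:ℝ) < ((a + 1:ℕ):ℝ) := by push_cast; linarith [hm.2.1]
    have := Nat.cast_lt.mp this
    omega
  have hys : a + 1 ≤ y + s := by
    have : ((a:ℕ):ℝ) < ((y + s:ℕ):ℝ) := by push_cast; linarith [hm.2.2]
    have := Nat.cast_lt.mp this
    omega
  have hs : 0 < s := hD.1 _ hq
  have hne : (0, y, s) ≠ (0, 0, a) := by intro hEq; rw [Prod.mk.injEq, Prod.mk.injEq] at hEq; omega
  have hdisj := diss_disj hD hq hBL hne
  have hyeq : y = a := by omega
  subst hyeq
  exact ⟨s, hs, hq⟩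

lemma filler_top (hD : IsDissection n D)
    (hTL : (0, yc, c) ∈ D) (hc : 0 < c) (hyc : yc + c = n) (hd : 0 < d)
    (hdef : c + d < n) :
    ∃ s ys, 0 < s ∧ ys + s = n ∧ (c, ys, s) ∈ D := by
  have hcn : c + 1 ≤ n := by omega
  have hp : (((c:ℝ) + 1/2), ((n:ℕ):ℝ)) ∈ Set.Icc (0:ℝ) (n:ℝ) ×ˢ Set.Icc (0:ℝ) (n:ℝ) := by
    have h1 : (0:ℝ) ≤ c := Nat.cast_nonneg c
    have h2 : ((c:ℝ)) + 1 ≤ n := by exact_mod_cast (by exact_mod_cast hcn : ((c+1:ℕ):ℝ) ≤ ((n:ℕ):ℝ))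
    refine ⟨Set.mem_Icc.mpr ⟨by linarith, by linarith⟩, Set.mem_Icc.mpr ⟨by positivity, le_refl _⟩⟩
  obtain ⟨⟨x, y, s⟩, hq, hm⟩ := diss_cover hD hp
  rw [mem_closedSq] at hm
  have hysn : y + s = n := by
    have h1 : n ≤ y + s := by exact_mod_cast hm.2.2
    have h2 := (diss_bound hD hq).2
    omega
  have hxc : x ≤ c := by
    have : (x:ℝ) < ((c + 1:ℕ):ℝ) := by push_cast; linarith [hm.1.1]
    have := Nat.cast_lt.mp this
    omega
  have hxs : c + 1 ≤ x + s := by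
    have : ((c:ℕ):ℝ) < ((x + s:ℕ):ℝ) := by push_cast; linarith [hm.1.2]
    have := Nat.cast_lt.mp this
    omega
  have hs : 0 < s := hD.1 _ hq
  have hne : (x, y, s) ≠ (0, yc, c) := by intro hEq; rw [Prod.mk.injEq, Prod.mk.injEq] at hEq; omega
  have hdisj := diss_disj hD hq hTL hne
  have hxeq : x = c := by omega
  subst hxeq
  exact ⟨s, y, hs, hysn, hq⟩

lemma filler_right (hD : IsDissection n D)
    (hBR : (xb, 0, b) ∈ D) (hb : 0 < b) (hxb : xb + b = n) (hd : 0 < d)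
    (hdef : b + d < n) :
    ∃ s xs, 0 < s ∧ xs + s = n ∧ (xs, b, s) ∈ D := by
  have hbn : b + 1 ≤ n := by omega
  have hp : (((n:ℕ):ℝ), ((b:ℝ) + 1/2)) ∈ Set.Icc (0:ℝ) (n:ℝ) ×ˢ Set.Icc (0:ℝ) (n:ℝ) := by
    have h1 : (0:ℝ) ≤ b := Nat.cast_nonneg b
    have h2 : ((b:ℝ)) + 1 ≤ n := by exact_mod_cast (by exact_mod_cast hbn : ((b+1:ℕ):ℝ) ≤ ((n:ℕ):ℝ))
    refine ⟨Set.mem_Icc.mpr ⟨by positivity, le_refl _⟩, Set.mem_Icc.mpr ⟨by linarith, by linarith⟩⟩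
  obtain ⟨⟨x, y, s⟩, hq, hm⟩ := diss_cover hD hp
  rw [mem_closedSq] at hm
  have hxsn : x + s = n := by
    have h1 : n ≤ x + s := by exact_mod_cast hm.1.2
    have h2 := (diss_bound hD hq).1
    omega
  have hyb : y ≤ b := by
    have : (y:ℝ) < ((b + 1:ℕ):ℝ) := by push_cast; linarith [hm.2.1]
    have := Nat.cast_lt.mp this
    omega
  have hys : b + 1 ≤ y + s := by
    have : ((b:ℕ):ℝ) < ((y + s:ℕ):ℝ) := by push_cast; linarith [hm.2.2]
    have := Nat.cast_lt.mp this
    omega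
  have hs : 0 < s := hD.1 _ hq
  have hne : (x, y, s) ≠ (xb, 0, b) := by intro hEq; rw [Prod.mk.injEq, Prod.mk.injEq] at hEq; omega
  have hdisj := diss_disj hD hq hBR hne
  have hyeq : y = b := by omega
  subst hyeq
  exact ⟨s, x, hs, hxsn, hq⟩

end Fillers

lemma four_le_card {n : ℕ} {D : Finset (ℕ × ℕ × ℕ)} (hn : 0 < n)
    (hD : IsDissection n D) (hsm : ∀ q ∈ D, q.2.2 < n) : 4 ≤ D.card := by
  obtain ⟨a, ha, hBL⟩ := corner_BL hD hn
  obtain ⟨xb, b, hb, hxb, hBR⟩ := corner_BR hD hn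
  obtain ⟨yc, c, hc, hyc, hTL⟩ := corner_TL hD hn
  obtain ⟨xd, yd, d, hd, hxd, hyd, hTR⟩ := corner_TR hD hn
  have hbn : b < n := hsm _ hBR
  have hcn : c < n := hsm _ hTL
  have hdn : d < n := hsm _ hTR
  have hsub : ({(0,0,a), (xb,0,b), (0,yc,c), (xd,yd,d)} : Finset (ℕ×ℕ×ℕ)) ⊆ D := by
    simp only [Finset.insert_subset_iff, Finset.singleton_subset_iff]
    exact ⟨hBL, hBR, hTL, hTR⟩
  have hcard : ({(0,0,a), (xb,0,b), (0,yc,c), (xd,yd,d)} : Finset (ℕ×ℕ×ℕ)).card = 4 := by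
    rw [Finset.card_insert_of_notMem (by
          simp only [Finset.mem_insert, Finset.mem_singleton, Prod.mk.injEq]; omega),
        Finset.card_insert_of_notMem (by
          simp only [Finset.mem_insert, Finset.mem_singleton, Prod.mk.injEq]; omega),
        Finset.card_insert_of_notMem (by
          simp only [Finset.mem_singleton, Prod.mk.injEq]; omega),
        Finset.card_singleton]
  calc 4 = _ := hcard.symm
    _ ≤ D.card := Finset.card_le_card hsub

set_option maxHeartbeats 1000000 in
lemma six_le_card {n : ℕ} {D : Finset (ℕ × ℕ × ℕ)} (hn : 3 ≤ n) (hodd : Odd n)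
    (hD : IsDissection n D) (hsm : ∀ q ∈ D, q.2.2 < n) : 6 ≤ D.card := by
  have hn0 : 0 < n := by omega
  obtain ⟨a, ha, hBL⟩ := corner_BL hD hn0
  obtain ⟨xb, b, hb, hxb, hBR⟩ := corner_BR hD hn0
  obtain ⟨yc, c, hc, hyc, hTL⟩ := corner_TL hD hn0
  obtain ⟨xd, yd, d, hd, hxd, hyd, hTR⟩ := corner_TR hD hn0
  have han : a < n := hsm _ hBL
  have hbn : b < n := hsm _ hBR
  have hcn : c < n := hsm _ hTL
  have hdn : d < n := hsm _ hTR
  -- edge and diagonal inequalities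
  have hab : a + b ≤ n := by
    have := diss_disj hD hBL hBR (by intro hEq; rw [Prod.mk.injEq, Prod.mk.injEq] at hEq; omega)
    omega
  have hac : a + c ≤ n := by
    have := diss_disj hD hBL hTL (by intro hEq; rw [Prod.mk.injEq, Prod.mk.injEq] at hEq; omega)
    omega
  have hbd : b + d ≤ n := by
    have := diss_disj hD hBR hTR (by intro hEq; rw [Prod.mk.injEq, Prod.mk.injEq] at hEq; omega)
    omega
  have hcd : c + d ≤ n := by
    have := diss_disj hD hTL hTR (by intro hEq; rw [Prod.mk.injEq, Prod.mk.injEq] at hEq; omega)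
    omega
  have had : a + d ≤ n := by
    have := diss_disj hD hBL hTR (by intro hEq; rw [Prod.mk.injEq, Prod.mk.injEq] at hEq; omega)
    omega
  have hbc : b + c ≤ n := by
    have := diss_disj hD hBR hTL (by intro hEq; rw [Prod.mk.injEq, Prod.mk.injEq] at hEq; omega)
    omega
  obtain ⟨k, hk⟩ := hodd
  have hpairs : (a+b<n ∧ a+c<n) ∨ (a+b<n ∧ c+d<n) ∨ (a+b<n ∧ b+d<n) ∨
      (a+c<n ∧ c+d<n) ∨ (a+c<n ∧ b+d<n) ∨ (c+d<n ∧ b+d<n) := by omega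
  -- helper to finish given two extra squares
  have finish : ∀ E1 E2 : ℕ × ℕ × ℕ, E1 ∈ D → E2 ∈ D →
      E1 ∉ ({(0,0,a), (xb,0,b), (0,yc,c), (xd,yd,d)} : Finset (ℕ×ℕ×ℕ)) →
      E2 ∉ ({(0,0,a), (xb,0,b), (0,yc,c), (xd,yd,d)} : Finset (ℕ×ℕ×ℕ)) →
      E1 ≠ E2 → 6 ≤ D.card := by
    intro E1 E2 h1 h2 h1n h2n h12
    have hsub : insert E1 (insert E2 ({(0,0,a), (xb,0,b), (0,yc,c), (xd,yd,d)} : Finset (ℕ×ℕ×ℕ))) ⊆ D := by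
      simp only [Finset.insert_subset_iff, Finset.singleton_subset_iff]
      exact ⟨h1, h2, hBL, hBR, hTL, hTR⟩
    have hcard4 : ({(0,0,a), (xb,0,b), (0,yc,c), (xd,yd,d)} : Finset (ℕ×ℕ×ℕ)).card = 4 := by
      rw [Finset.card_insert_of_notMem (by
            simp only [Finset.mem_insert, Finset.mem_singleton, Prod.mk.injEq]; omega),
          Finset.card_insert_of_notMem (by
            simp only [Finset.mem_insert, Finset.mem_singleton, Prod.mk.injEq]; omega),
          Finset.card_insert_of_notMem (by
            simp only [Finset.mem_singleton, Prod.mk.injEq]; omega),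
          Finset.card_singleton]
    have hcard : (insert E1 (insert E2 ({(0,0,a), (xb,0,b), (0,yc,c), (xd,yd,d)} : Finset (ℕ×ℕ×ℕ)))).card = 6 := by
      rw [Finset.card_insert_of_notMem (by
            simp only [Finset.mem_insert, Finset.mem_singleton] at h1n ⊢
            tauto),
          Finset.card_insert_of_notMem h2n, hcard4]
    calc 6 = _ := hcard.symm
      _ ≤ D.card := Finset.card_le_card hsub
  rcases hpairs with ⟨h1, h2⟩ | ⟨h1, h2⟩ | ⟨h1, h2⟩ | ⟨h1, h2⟩ | ⟨h1, h2⟩ | ⟨h1, h2⟩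
  · -- bottom and left deficient
    obtain ⟨s1, hs1, hE1⟩ := filler_bottom hD hBL ha hb hxb h1
    obtain ⟨s2, hs2, hE2⟩ := filler_left hD hBL ha hc hyc h2
    exact finish _ _ hE1 hE2
      (by simp only [Finset.mem_insert, Finset.mem_singleton, Prod.mk.injEq]; omega)
      (by simp only [Finset.mem_insert, Finset.mem_singleton, Prod.mk.injEq]; omega)
      (by intro hEq; rw [Prod.mk.injEq, Prod.mk.injEq] at hEq; omega)
  · -- bottom and top deficient
    obtain ⟨s1, hs1, hE1⟩ := filler_bottom hD hBL ha hb hxb h1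
    obtain ⟨s2, y2, hs2, hy2, hE2⟩ := filler_top hD hTL hc hyc hd h2
    have hs2n : s2 < n := hsm _ hE2
    exact finish _ _ hE1 hE2
      (by simp only [Finset.mem_insert, Finset.mem_singleton, Prod.mk.injEq]; omega)
      (by simp only [Finset.mem_insert, Finset.mem_singleton, Prod.mk.injEq]; omega)
      (by intro hEq; rw [Prod.mk.injEq, Prod.mk.injEq] at hEq; omega)
  · -- bottom and right deficient
    obtain ⟨s1, hs1, hE1⟩ := filler_bottom hD hBL ha hb hxb h1
    obtain ⟨s2, x2, hs2, hx2, hE2⟩ := filler_right hD hBR hb hxb hd h2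
    have hs2n : s2 < n := hsm _ hE2
    exact finish _ _ hE1 hE2
      (by simp only [Finset.mem_insert, Finset.mem_singleton, Prod.mk.injEq]; omega)
      (by simp only [Finset.mem_insert, Finset.mem_singleton, Prod.mk.injEq]; omega)
      (by intro hEq; rw [Prod.mk.injEq, Prod.mk.injEq] at hEq; omega)
  · -- left and top deficient
    obtain ⟨s1, hs1, hE1⟩ := filler_left hD hBL ha hc hyc h1
    obtain ⟨s2, y2, hs2, hy2, hE2⟩ := filler_top hD hTL hc hyc hd h2
    have hs2n : s2 < n := hsm _ hE2
    exact finish _ _ hE1 hE2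
      (by simp only [Finset.mem_insert, Finset.mem_singleton, Prod.mk.injEq]; omega)
      (by simp only [Finset.mem_insert, Finset.mem_singleton, Prod.mk.injEq]; omega)
      (by intro hEq; rw [Prod.mk.injEq, Prod.mk.injEq] at hEq; omega)
  · -- left and right deficient
    obtain ⟨s1, hs1, hE1⟩ := filler_left hD hBL ha hc hyc h1
    obtain ⟨s2, x2, hs2, hx2, hE2⟩ := filler_right hD hBR hb hxb hd h2
    have hs2n : s2 < n := hsm _ hE2
    exact finish _ _ hE1 hE2
      (by simp only [Finset.mem_insert, Finset.mem_singleton, Prod.mk.injEq]; omega)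
      (by simp only [Finset.mem_insert, Finset.mem_singleton, Prod.mk.injEq]; omega)
      (by intro hEq; rw [Prod.mk.injEq, Prod.mk.injEq] at hEq; omega)
  · -- top and right deficient
    obtain ⟨s1, y1, hs1, hy1, hE1⟩ := filler_top hD hTL hc hyc hd h1
    obtain ⟨s2, x2, hs2, hx2, hE2⟩ := filler_right hD hBR hb hxb hd h2
    have hs1n : s1 < n := hsm _ hE1
    have hs2n : s2 < n := hsm _ hE2
    have hne12 : ((c, y1, s1) : ℕ × ℕ × ℕ) ≠ (x2, b, s2) := by
      intro hEq
      rw [Prod.mk.injEq, Prod.mk.injEq] at hEq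
      obtain ⟨hc2, hy1b, hss⟩ := hEq
      -- the common square F = (c, b, s2) touches corner (n,n) and overlaps TR
      have hF : (c, b, s2) ∈ D := by rw [← hy1b, ← hss]; rw [← hc2] at hE2; exact hE1
      have hFne : ((c, b, s2) : ℕ × ℕ × ℕ) ≠ (xd, yd, d) := by
        intro hEq2; rw [Prod.mk.injEq, Prod.mk.injEq] at hEq2; omega
      have := diss_disj hD hF hTR hFne
      omega
    exact finish _ _ hE1 hE2
      (by simp only [Finset.mem_insert, Finset.mem_singleton, Prod.mk.injEq]; omega)
      (by simp only [Finset.mem_insert, Finset.mem_singleton, Prod.mk.injEq]; omega)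
      hne12

lemma openSq_disj_x {x y s x' y' s' : ℕ} (h : x + s ≤ x') :
    openSq (x, y, s) ∩ openSq (x', y', s') = ∅ := by
  rw [Set.eq_empty_iff_forall_notMem]
  rintro ⟨u, v⟩ ⟨h1, h2⟩
  rw [mem_openSq] at h1 h2
  have hc : ((x + s : ℕ):ℝ) ≤ ((x' : ℕ):ℝ) := Nat.cast_le.mpr h
  push_cast at hc
  linarith [h1.1.2, h2.1.1]

lemma openSq_disj_y {x y s x' y' s' : ℕ} (h : y + s ≤ y') :
    openSq (x, y, s) ∩ openSq (x', y', s') = ∅ := by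
  rw [Set.eq_empty_iff_forall_notMem]
  rintro ⟨u, v⟩ ⟨h1, h2⟩
  rw [mem_openSq] at h1 h2
  have hc : ((y + s : ℕ):ℝ) ≤ ((y' : ℕ):ℝ) := Nat.cast_le.mpr h
  push_cast at hc
  linarith [h1.2.2, h2.2.1]

lemma exists_dissection_even (m : ℕ) (hm : 0 < m) :
    ∃ D : Finset (ℕ × ℕ × ℕ), IsDissection (2*m) D ∧ (∀ q ∈ D, q.2.2 < 2*m) ∧ D.card = 4 := by
  refine ⟨{(0,0,m), (m,0,m), (0,m,m), (m,m,m)}, ⟨?_, ?_, ?_⟩, ?_, ?_⟩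
  · intro q hq
    simp only [Finset.mem_insert, Finset.mem_singleton] at hq
    rcases hq with h | h | h | h <;> subst h <;> exact hm
  · ext ⟨u, v⟩
    simp only [Set.mem_iUnion, exists_prop, Finset.mem_insert, Finset.mem_singleton,
      Set.mem_prod, Set.mem_Icc]
    have hcast : ((2*m : ℕ):ℝ) = 2 * (m:ℝ) := by push_cast; ring
    have hm0 : (0:ℝ) ≤ (m:ℝ) := Nat.cast_nonneg m
    constructor
    · rintro ⟨q, (h | h | h | h), hmem⟩ <;> subst h <;> rw [mem_closedSq] at hmem <;>
        push_cast at hmem ⊢ <;>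
        exact ⟨⟨by linarith [hmem.1.1], by linarith [hmem.1.2]⟩,
               by linarith [hmem.2.1], by linarith [hmem.2.2]⟩
    · rintro ⟨⟨hu0, hu2⟩, hv0, hv2⟩
      push_cast at hu2 hv2
      rcases le_or_gt u (m:ℝ) with hu | hu <;> rcases le_or_gt v (m:ℝ) with hv | hv
      · exact ⟨(0,0,m), Or.inl rfl, mem_closedSq.mpr (by push_cast; exact ⟨⟨hu0, by linarith⟩, hv0, by linarith⟩)⟩
      · exact ⟨(0,m,m), Or.inr (Or.inr (Or.inl rfl)), mem_closedSq.mpr (by push_cast; exact ⟨⟨hu0, by linarith⟩, by linarith, by linarith⟩)⟩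
      · exact ⟨(m,0,m), Or.inr (Or.inl rfl), mem_closedSq.mpr (by push_cast; exact ⟨⟨by linarith, by linarith⟩, hv0, by linarith⟩)⟩
      · exact ⟨(m,m,m), Or.inr (Or.inr (Or.inr rfl)), mem_closedSq.mpr (by push_cast; exact ⟨⟨by linarith, by linarith⟩, by linarith, by linarith⟩)⟩
  · intro q hq q' hq' hne
    simp only [Finset.mem_insert, Finset.mem_singleton] at hq hq'
    rcases hq with h | h | h | h <;> rcases hq' with h' | h' | h' | h' <;> subst h <;> subst h' <;>
      first
        | exact absurd rfl hne
        | exact openSq_disj_x (by omega)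
        | exact openSq_disj_y (by omega)
        | · rw [Set.inter_comm]
            first
              | exact openSq_disj_x (by omega)
              | exact openSq_disj_y (by omega)
  · intro q hq
    simp only [Finset.mem_insert, Finset.mem_singleton] at hq
    rcases hq with h | h | h | h <;> subst h <;> simp <;> omega
  · rw [Finset.card_insert_of_notMem (by
          simp only [Finset.mem_insert, Finset.mem_singleton, Prod.mk.injEq]; omega),
        Finset.card_insert_of_notMem (by
          simp only [Finset.mem_insert, Finset.mem_singleton, Prod.mk.injEq]; omega),
        Finset.card_insert_of_notMem (by
          simp only [Finset.mem_singleton, Prod.mk.injEq]; omega),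
        Finset.card_singleton]

theorem least_order_proper_dissection :
    (∀ n : ℕ, 2 ≤ n → Even n →
      (∃ D : Finset (ℕ × ℕ × ℕ), IsDissection n D ∧ (∀ q ∈ D, q.2.2 < n) ∧ D.card = 4) ∧
      (∀ D : Finset (ℕ × ℕ × ℕ), IsDissection n D → (∀ q ∈ D, q.2.2 < n) → 4 ≤ D.card)) ∧
    (∀ n : ℕ, 3 ≤ n → Odd n →
      ∀ D : Finset (ℕ × ℕ × ℕ), IsDissection n D → (∀ q ∈ D, q.2.2 < n) → 6 ≤ D.card) := by
  constructor
  · intro n hn heven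
    obtain ⟨k, hk⟩ := heven
    have hk2 : n = 2 * k := by omega
    subst hk2
    constructor
    · exact exists_dissection_even k (by omega)
    · intro D hD hsm
      exact four_le_card (by omega) hD hsm
  · intro n hn hodd D hD hsm
    exact six_le_card hn hodd hD hsm
end

section
/- f(4) = 7: the 4×4 square admits a prime dissection into exactly 7 integer-sided squares, and admits no prime dissection into fewer than 7 squares. -/
open MeasureTheory ENNReal

lemma vol_closedSq (q : ℕ × ℕ × ℕ) : volume (closedSq q) = (q.2.2 : ℝ≥0∞) ^ 2 := by
  rw [closedSq, Measure.volume_eq_prod, Measure.prod_prod, Real.volume_Icc]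
  simp [sq]

lemma vol_openSq (q : ℕ × ℕ × ℕ) : volume (openSq q) = (q.2.2 : ℝ≥0∞) ^ 2 := by
  rw [openSq, Measure.volume_eq_prod, Measure.prod_prod, Real.volume_Ioo]
  simp [sq]

lemma area_sum {D : Finset (ℕ × ℕ × ℕ)} (hD : IsDissection 4 D) :
    ∑ q ∈ D, q.2.2 ^ 2 = 16 := by
  obtain ⟨hpos, huniv, hdisj⟩ := hD
  have hbox : volume (Set.Icc (0 : ℝ) (4 : ℝ) ×ˢ Set.Icc (0 : ℝ) (4 : ℝ)) = 16 := by
    rw [Measure.volume_eq_prod, Measure.prod_prod, Real.volume_Icc]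
    norm_num
  have hle1 : (∑ q ∈ D, (q.2.2 : ℝ≥0∞) ^ 2) ≤ 16 := by
    have hd : (↑D : Set (ℕ × ℕ × ℕ)).PairwiseDisjoint openSq := by
      intro a ha b hb hab
      have := hdisj a ha b hb hab
      exact Set.disjoint_iff_inter_eq_empty.2 this
    have hm : ∀ q ∈ D, MeasurableSet (openSq q) := by
      intro q _
      exact (measurableSet_Ioo).prod measurableSet_Ioo
    calc (∑ q ∈ D, (q.2.2 : ℝ≥0∞) ^ 2) = ∑ q ∈ D, volume (openSq q) := by
            simp [vol_openSq]
      _ = volume (⋃ q ∈ D, openSq q) := (measure_biUnion_finset hd hm).symm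
      _ ≤ volume (⋃ q ∈ D, closedSq q) := by
            apply measure_mono
            apply Set.iUnion₂_mono
            intro q _
            rintro ⟨x, y⟩ ⟨hx, hy⟩
            exact ⟨⟨le_of_lt hx.1, le_of_lt hx.2⟩, ⟨le_of_lt hy.1, le_of_lt hy.2⟩⟩
      _ = 16 := by rw [huniv]; exact_mod_cast hbox
  have hle2 : (16 : ℝ≥0∞) ≤ ∑ q ∈ D, (q.2.2 : ℝ≥0∞) ^ 2 := by
    calc (16 : ℝ≥0∞) = volume (⋃ q ∈ D, closedSq q) := by rw [huniv]; exact_mod_cast hbox.symm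
      _ ≤ ∑ q ∈ D, volume (closedSq q) := measure_biUnion_finset_le D _
      _ = ∑ q ∈ D, (q.2.2 : ℝ≥0∞) ^ 2 := by simp [vol_closedSq]
  have heq : (∑ q ∈ D, (q.2.2 : ℝ≥0∞) ^ 2) = 16 := le_antisymm hle1 hle2
  have : ((∑ q ∈ D, q.2.2 ^ 2 : ℕ) : ℝ≥0∞) = ((16 : ℕ) : ℝ≥0∞) := by
    push_cast
    rw [heq]
  exact_mod_cast this

lemma bounds {D : Finset (ℕ × ℕ × ℕ)} (hD : IsDissection 4 D) {q : ℕ × ℕ × ℕ} (hq : q ∈ D) :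
    q.1 + q.2.2 ≤ 4 ∧ q.2.1 + q.2.2 ≤ 4 := by
  obtain ⟨hpos, huniv, hdisj⟩ := hD
  have hsub : closedSq q ⊆ Set.Icc (0 : ℝ) 4 ×ˢ Set.Icc (0 : ℝ) 4 := by
    rw [show (Set.Icc (0:ℝ) 4 ×ˢ Set.Icc (0:ℝ) 4) = Set.Icc (0:ℝ) ((4:ℕ):ℝ) ×ˢ Set.Icc (0:ℝ) ((4:ℕ):ℝ) by norm_num,
      ← huniv]
    exact Set.subset_biUnion_of_mem hq
  have hmem : ((q.1 : ℝ) + q.2.2, (q.2.1 : ℝ) + q.2.2) ∈ closedSq q := by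
    constructor <;> exact ⟨le_add_of_nonneg_right (by positivity), le_refl _⟩
  obtain ⟨⟨_, h1⟩, ⟨_, h2⟩⟩ := hsub hmem
  simp only at h1 h2
  constructor <;> [exact_mod_cast h1; exact_mod_cast h2]

lemma overlap {q q' : ℕ × ℕ × ℕ}
    (h1 : max q.1 q'.1 < min (q.1 + q.2.2) (q'.1 + q'.2.2))
    (h2 : max q.2.1 q'.2.1 < min (q.2.1 + q.2.2) (q'.2.1 + q'.2.2)) :
    (openSq q ∩ openSq q').Nonempty := by
  have a1 : (q.1 : ℝ) ≤ ((max q.1 q'.1 : ℕ) : ℝ) := by exact_mod_cast le_max_left q.1 q'.1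
  have a1' : (q'.1 : ℝ) ≤ ((max q.1 q'.1 : ℕ) : ℝ) := by exact_mod_cast le_max_right q.1 q'.1
  have a2 : (q.2.1 : ℝ) ≤ ((max q.2.1 q'.2.1 : ℕ) : ℝ) := by exact_mod_cast le_max_left q.2.1 q'.2.1
  have a2' : (q'.2.1 : ℝ) ≤ ((max q.2.1 q'.2.1 : ℕ) : ℝ) := by exact_mod_cast le_max_right q.2.1 q'.2.1
  have b1 : ((max q.1 q'.1 : ℕ) : ℝ) + 1 ≤ (q.1 : ℝ) + q.2.2 := by
    exact_mod_cast le_trans (Nat.succ_le_of_lt h1) (min_le_left _ _)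
  have b1' : ((max q.1 q'.1 : ℕ) : ℝ) + 1 ≤ (q'.1 : ℝ) + q'.2.2 := by
    exact_mod_cast le_trans (Nat.succ_le_of_lt h1) (min_le_right _ _)
  have b2 : ((max q.2.1 q'.2.1 : ℕ) : ℝ) + 1 ≤ (q.2.1 : ℝ) + q.2.2 := by
    exact_mod_cast le_trans (Nat.succ_le_of_lt h2) (min_le_left _ _)
  have b2' : ((max q.2.1 q'.2.1 : ℕ) : ℝ) + 1 ≤ (q'.2.1 : ℝ) + q'.2.2 := by
    exact_mod_cast le_trans (Nat.succ_le_of_lt h2) (min_le_right _ _)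
  exact ⟨(((max q.1 q'.1 : ℕ) : ℝ) + 1/2, ((max q.2.1 q'.2.1 : ℕ) : ℝ) + 1/2), ⟨⟨by linarith, by linarith⟩, ⟨by linarith, by linarith⟩⟩,
    ⟨⟨by linarith, by linarith⟩, ⟨by linarith, by linarith⟩⟩⟩

lemma lower_bound {D : Finset (ℕ × ℕ × ℕ)} (hD : IsDissection 4 D)
    (hgcd : D.gcd (fun q => q.2.2) = 1) : 7 ≤ D.card := by
  by_contra hcard
  push_neg at hcard
  have hcard6 : D.card ≤ 6 := by omega
  have hsum := area_sum hD
  obtain ⟨hpos, huniv, hdisj⟩ := hD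
  have hb := fun {q} (hq : q ∈ D) => bounds ⟨hpos, huniv, hdisj⟩ hq
  -- no square of side 4
  have h4 : ∀ q ∈ D, q.2.2 ≠ 4 := by
    intro q hq hq4
    have hx : q.1 = 0 := by have := (hb hq).1; omega
    have hy : q.2.1 = 0 := by have := (hb hq).2; omega
    have hall : ∀ q' ∈ D, q' = q := by
      intro q' hq'
      by_contra hne
      have hov : (openSq q ∩ openSq q').Nonempty := by
        apply overlap
        · have h1 := (hb hq').1
          have h1' := hpos q' hq'
          omega
        · have h2 := (hb hq').2
          have h2' := hpos q' hq'
          omega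
      rw [hdisj q hq q' hq' (fun h => hne h.symm)] at hov
      exact Set.not_nonempty_empty hov
    have hsing : D = {q} := by
      apply Finset.eq_singleton_iff_unique_mem.2 ⟨hq, hall⟩
    rw [hsing, Finset.gcd_singleton] at hgcd
    simp [hq4] at hgcd
  -- side ≤ 3
  have h3le : ∀ q ∈ D, 1 ≤ q.2.2 ∧ q.2.2 ≤ 3 := by
    intro q hq
    have := hpos q hq
    have := (hb hq).1
    have := h4 q hq
    omega
  -- no coexisting side-3 and side-2
  have h32 : ∀ q ∈ D, q.2.2 = 3 → ∀ q' ∈ D, q'.2.2 ≠ 2 := by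
    intro q hq hq3 q' hq' hq2
    have hne : q ≠ q' := fun h => by rw [h] at hq3; omega
    have hov : (openSq q ∩ openSq q').Nonempty := by
      apply overlap
      · have := (hb hq).1; have := (hb hq').1; omega
      · have := (hb hq).2; have := (hb hq').2; omega
    rw [hdisj q hq q' hq' hne] at hov
    exact Set.not_nonempty_empty hov
  -- counting
  classical
  set D1 := D.filter (fun q => q.2.2 = 1) with hD1
  set E1 := D.filter (fun q => ¬ q.2.2 = 1) with hE1
  set D2 := E1.filter (fun q => q.2.2 = 2) with hD2
  set E2 := E1.filter (fun q => ¬ q.2.2 = 2) with hE2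
  have hcsplit1 : D1.card + E1.card = D.card := Finset.card_filter_add_card_filter_not _
  have hcsplit2 : D2.card + E2.card = E1.card := Finset.card_filter_add_card_filter_not _
  have hssplit1 : ∑ q ∈ D1, q.2.2 ^ 2 + ∑ q ∈ E1, q.2.2 ^ 2 = 16 := by
    rw [← hsum]; exact Finset.sum_filter_add_sum_filter_not D _ _
  have hssplit2 : ∑ q ∈ D2, q.2.2 ^ 2 + ∑ q ∈ E2, q.2.2 ^ 2 = ∑ q ∈ E1, q.2.2 ^ 2 :=
    Finset.sum_filter_add_sum_filter_not E1 _ _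
  have hs1 : ∑ q ∈ D1, q.2.2 ^ 2 = D1.card := by
    have h : ∀ q ∈ D1, q.2.2 ^ 2 = 1 := fun q hq => by
      rw [hD1] at hq; rw [(Finset.mem_filter.1 hq).2]; norm_num
    calc ∑ q ∈ D1, q.2.2 ^ 2 = ∑ _q ∈ D1, 1 := Finset.sum_congr rfl h
      _ = D1.card := by simp
  have hs2 : ∑ q ∈ D2, q.2.2 ^ 2 = 4 * D2.card := by
    have h : ∀ q ∈ D2, q.2.2 ^ 2 = 4 := fun q hq => by
      rw [hD2] at hq; rw [(Finset.mem_filter.1 hq).2]; norm_num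
    calc ∑ q ∈ D2, q.2.2 ^ 2 = ∑ _q ∈ D2, 4 := Finset.sum_congr rfl h
      _ = 4 * D2.card := by simp [mul_comm]
  have hE2mem : ∀ q ∈ E2, q ∈ D ∧ q.2.2 = 3 := by
    intro q hq
    rw [hE2] at hq
    obtain ⟨hq1, hq2⟩ := Finset.mem_filter.1 hq
    rw [hE1] at hq1
    obtain ⟨hqD, hqn1⟩ := Finset.mem_filter.1 hq1
    have := h3le q hqD
    exact ⟨hqD, by omega⟩
  have hs3 : ∑ q ∈ E2, q.2.2 ^ 2 = 9 * E2.card := by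
    have h : ∀ q ∈ E2, q.2.2 ^ 2 = 9 := fun q hq => by
      rw [(hE2mem q hq).2]; norm_num
    calc ∑ q ∈ E2, q.2.2 ^ 2 = ∑ _q ∈ E2, 9 := Finset.sum_congr rfl h
      _ = 9 * E2.card := by simp [mul_comm]
  rcases Finset.eq_empty_or_nonempty E2 with hE2e | hE2ne
  · -- all sides in {1,2}
    have hE2c : E2.card = 0 := by rw [hE2e]; rfl
    have hD1c : D1.card = 0 ∧ D2.card = 4 := by omega
    -- every element of D has side 2
    have hall2 : ∀ q ∈ D, q.2.2 = 2 := by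
      intro q hq
      by_contra hne2
      have h1 : q.2.2 ≠ 1 := by
        intro h1
        have : q ∈ D1 := by rw [hD1]; exact Finset.mem_filter.2 ⟨hq, h1⟩
        have := Finset.card_pos.2 ⟨q, this⟩
        omega
      have : q ∈ E2 := by
        rw [hE2]; refine Finset.mem_filter.2 ⟨?_, by simpa using hne2⟩
        rw [hE1]; exact Finset.mem_filter.2 ⟨hq, by simpa using h1⟩
      rw [hE2e] at this
      exact absurd this (Finset.notMem_empty q)
    have hdvd : (2 : ℕ) ∣ D.gcd (fun q => q.2.2) :=
      Finset.dvd_gcd (fun q hq => by rw [hall2 q hq])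
    rw [hgcd] at hdvd
    omega
  · -- a side-3 square exists, so D2 = ∅
    obtain ⟨q3, hq3⟩ := hE2ne
    have hq3' := hE2mem q3 hq3
    have hD2e : D2.card = 0 := by
      rw [Finset.card_eq_zero, Finset.eq_empty_iff_forall_notMem]
      intro q hq
      rw [hD2] at hq
      obtain ⟨hq1, hq2⟩ := Finset.mem_filter.1 hq
      rw [hE1] at hq1
      obtain ⟨hqD, _⟩ := Finset.mem_filter.1 hq1
      exact h32 q3 hq3'.1 hq3'.2 q hqD (by simpa using hq2)
    omega

def D₀ : Finset (ℕ × ℕ × ℕ) :=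
  {(0,0,2),(2,0,2),(0,2,2),(2,2,1),(3,2,1),(2,3,1),(3,3,1)}

lemma sepX {q q' : ℕ × ℕ × ℕ} (h : q.1 + q.2.2 ≤ q'.1) : openSq q ∩ openSq q' = ∅ := by
  apply Set.eq_empty_iff_forall_notMem.2
  rintro ⟨x, y⟩ ⟨⟨⟨_, hx2⟩, _⟩, ⟨⟨hx3, _⟩, _⟩⟩
  have : (q.1 : ℝ) + q.2.2 ≤ q'.1 := by exact_mod_cast h
  simp only at hx2 hx3
  linarith

lemma sepY {q q' : ℕ × ℕ × ℕ} (h : q.2.1 + q.2.2 ≤ q'.2.1) : openSq q ∩ openSq q' = ∅ := by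
  apply Set.eq_empty_iff_forall_notMem.2
  rintro ⟨x, y⟩ ⟨⟨_, ⟨_, hy2⟩⟩, ⟨_, ⟨hy3, _⟩⟩⟩
  have : (q.2.1 : ℝ) + q.2.2 ≤ q'.2.1 := by exact_mod_cast h
  simp only at hy2 hy3
  linarith

lemma union_D₀ : (⋃ q ∈ D₀, closedSq q) = Set.Icc (0 : ℝ) ((4:ℕ) : ℝ) ×ˢ Set.Icc (0 : ℝ) ((4:ℕ) : ℝ) := by
  ext ⟨x, y⟩
  simp [D₀, closedSq, Prod.le_def]
  constructor
  · rintro (h|h|h|h|h|h|h) <;> obtain ⟨⟨a,b⟩,c,d⟩ := h <;>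
      exact ⟨⟨by linarith, by linarith⟩, by linarith, by linarith⟩
  · rintro ⟨⟨hx0, hy0⟩, hx4, hy4⟩
    rcases le_or_gt x 2 with hx | hx
    · rcases le_or_gt y 2 with hy | hy
      · exact Or.inl ⟨⟨hx0, hy0⟩, hx, hy⟩
      · exact Or.inr (Or.inr (Or.inl ⟨⟨hx0, by linarith⟩, hx, by linarith⟩))
    · rcases le_or_gt y 2 with hy | hy
      · exact Or.inr (Or.inl ⟨⟨by linarith, hy0⟩, by linarith, hy⟩)
      · rcases le_or_gt x 3 with hx3 | hx3 <;> rcases le_or_gt y 3 with hy3 | hy3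
        · exact Or.inr (Or.inr (Or.inr (Or.inl ⟨⟨by linarith, by linarith⟩, by linarith, by linarith⟩)))
        · exact Or.inr (Or.inr (Or.inr (Or.inr (Or.inr (Or.inl ⟨⟨by linarith, by linarith⟩, by linarith, by linarith⟩)))))
        · exact Or.inr (Or.inr (Or.inr (Or.inr (Or.inl ⟨⟨by linarith, by linarith⟩, by linarith, by linarith⟩))))
        · exact Or.inr (Or.inr (Or.inr (Or.inr (Or.inr (Or.inr ⟨⟨by linarith, by linarith⟩, by linarith, by linarith⟩)))))

lemma disj_D₀ : ∀ q ∈ D₀, ∀ q' ∈ D₀, q ≠ q' → openSq q ∩ openSq q' = ∅ := by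
  intro q hq q' hq' hne
  fin_cases hq <;> fin_cases hq' <;>
    first
    | exact absurd rfl hne
    | (apply sepX; decide)
    | (apply sepY; decide)
    | (rw [Set.inter_comm]; apply sepX; decide)
    | (rw [Set.inter_comm]; apply sepY; decide)

lemma prime_D₀ : IsPrimeDissection 4 D₀ ∧ D₀.card = 7 := by
  refine ⟨⟨⟨?_, ?_, disj_D₀⟩, ?_⟩, ?_⟩
  · decide
  · exact union_D₀
  · decide
  · decide

theorem f_four_eq_seven :
    (∃ D : Finset (ℕ × ℕ × ℕ), IsPrimeDissection 4 D ∧ D.card = 7) ∧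
    (∀ D : Finset (ℕ × ℕ × ℕ), IsPrimeDissection 4 D → 7 ≤ D.card) := by
  exact ⟨⟨D₀, prime_D₀⟩, fun D hD => lower_bound hD.1 hD.2⟩
end
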